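/- Let d ≥ 1, let γ : (0,1] → [0,∞) be measurable with ∫_{B_1(0)} |z| γ(|z|) dz < ∞, and set M = ∫_{B_1(0)} z_1² γ(|z|) dz. Let x ∈ ℝ^d and let u : ℝ^d → ℝ be twice continuously differentiable on a neighborhood of x. Then lim_{δ→0⁺} δ^{-(d+2)} ∫_{B_δ(x)} γ(|y−x|/δ) (u(y) − u(x)) dy = (M/2) · Δu(x), where Δu(x) is the Laplacian of u at x (the trace of the Hessian of u at x). -/

import Mathlib

/-!
Substituting `y = x + δ z` turns the operator into `∫_{B₁} δ⁻² (u (x + δ z) - u x) γ(|z|) dz`.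
The first-order Taylor term integrates to zero by the symmetry `z ↦ -z`, so the integrand may be
replaced by `δ⁻²` times the first-order Taylor remainder; this tends pointwise to
`½ D²u(x)(z, z) γ(|z|)` and is dominated by `C |z| |γ(|z|)|`, so dominated convergence applies.
In the limit `∫_{B₁} D²u(x)(z, z) γ(|z|) dz`, reflecting one coordinate kills the off-diagonal
terms and swapping two coordinates shows that every diagonal moment equals `M`.
-/

open MeasureTheory

/-- The Laplacian of `u` at `x`: the trace of the Hessian (second iterated
Fréchet derivative) of `u` at `x`. -/
noncomputable def laplacian (d : ℕ) (u : EuclideanSpace ℝ (Fin d) → ℝ)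
    (x : EuclideanSpace ℝ (Fin d)) : ℝ :=
  ∑ i : Fin d, iteratedFDeriv ℝ 2 u x (fun _ => EuclideanSpace.single i (1 : ℝ))

open Filter Topology Metric Asymptotics Set

section Taylor

variable {E : Type*} [NormedAddCommGroup E] [NormedSpace ℝ E] {u : E → ℝ} {x : E}

theorem ContinuousLinearMap.hasFDerivAt_half_apply_sub_self {A : E →L[ℝ] E →L[ℝ] ℝ}
    (hA : ∀ v w, A v w = A w v) (y : E) :
    HasFDerivAt (fun y => 2⁻¹ * A (y - x) (y - x)) (A (y - x)) y := by
  have hsub : HasFDerivAt (fun y : E => y - x) (ContinuousLinearMap.id ℝ E) y :=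
    (hasFDerivAt_id y).sub_const x
  have hA' : HasFDerivAt (fun y => A (y - x)) A y := by
    simpa using A.hasFDerivAt.sub_const (A x)
  refine ((hA'.clm_apply hsub).const_mul 2⁻¹).congr_fderiv ?_
  ext v
  have := hA v (y - x)
  simp only [map_sub, sub_apply, comp_id, smul_add, add_apply, smul_apply, smul_eq_mul,
    flip_apply] at this ⊢
  linarith

theorem ContDiffAt.isLittleO_taylor_two (hu : ContDiffAt ℝ 2 u x) :
    (fun y => u y - u x - fderiv ℝ u x (y - x) - 2⁻¹ * fderiv ℝ (fderiv ℝ u) x (y - x) (y - x))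
      =o[𝓝 x] fun y => ‖y - x‖ ^ 2 := by
  set L := fderiv ℝ u x
  set A := fderiv ℝ (fderiv ℝ u) x
  have hA : HasFDerivAt (fderiv ℝ u) A x :=
    ((hu.fderiv_right (m := 1) le_rfl).differentiableAt one_ne_zero).hasFDerivAt
  obtain ⟨r, hr, hdiff⟩ := eventually_nhds_iff_ball.1 <|
    (hu.eventually (by simp)).mono fun y hy => hy.differentiableAt two_ne_zero
  have hball : 𝓝[ball x r] x = 𝓝 x := isOpen_ball.nhdsWithin_eq (mem_ball_self hr)
  have hL (y : E) : HasFDerivAt (fun y => L (y - x)) L y := by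
    simpa using L.hasFDerivAt.sub_const (L x)
  have hderiv : ∀ y ∈ ball x r, HasFDerivWithinAt
      (fun y => u y - L (y - x) - 2⁻¹ * A (y - x) (y - x)) (fderiv ℝ u y - L - A (y - x))
      (ball x r) y := fun y hy =>
    (((hdiff y hy).hasFDerivAt.sub (hL y)).sub
      (ContinuousLinearMap.hasFDerivAt_half_apply_sub_self
        (hu.isSymmSndFDerivAt (by simp)).eq y)).hasFDerivWithinAt
  have hsmall : (fun y => fderiv ℝ u y - L - A (y - x)) =o[𝓝[ball x r] x]
      fun y => ‖y - x‖ ^ 1 := by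
    simpa [hball] using hA.isLittleO.norm_right
  have := (convex_ball x r).isLittleO_pow_succ (mem_ball_self hr) hderiv hsmall
  rw [hball] at this
  refine this.congr_left fun y => ?_
  simp only [sub_self, map_zero, mul_zero, sub_zero]
  ring

theorem ContDiffAt.isBigO_sub_sub_fderiv (hu : ContDiffAt ℝ 2 u x) :
    (fun y => u y - u x - fderiv ℝ u x (y - x)) =O[𝓝 x] fun y => ‖y - x‖ ^ 2 := by
  set A := fderiv ℝ (fderiv ℝ u) x
  have hquad : (fun y => A (y - x) (y - x)) =O[𝓝 x] fun y => ‖y - x‖ ^ 2 :=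
    .of_bound ‖A‖ <| .of_forall fun y => by
      simpa [sq, mul_assoc] using A.le_opNorm₂ (y - x) (y - x)
  refine (hu.isLittleO_taylor_two.isBigO.add (hquad.const_mul_left 2⁻¹)).congr_left fun y => ?_
  ring

theorem ContDiffAt.tendsto_inv_sq_mul_sub_sub_fderiv (hu : ContDiffAt ℝ 2 u x) (z : E) :
    Tendsto (fun δ : ℝ => (δ ^ 2)⁻¹ * (u (x + δ • z) - u x - fderiv ℝ u x (δ • z))) (𝓝[≠] 0)
      (𝓝 (2⁻¹ * fderiv ℝ (fderiv ℝ u) x z z)) := by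
  have hpath : Tendsto (fun δ : ℝ => x + δ • z) (𝓝 0) (𝓝 x) := by
    simpa using tendsto_const_nhds.add ((tendsto_id (x := 𝓝 (0 : ℝ))).smul_const z)
  have hscale : (fun δ : ℝ => ‖x + δ • z - x‖ ^ 2) =O[𝓝 0] fun δ => δ ^ 2 :=
    .of_bound (‖z‖ ^ 2) <| .of_forall fun δ => by simp [norm_smul, mul_pow, mul_comm]
  have hrem :=
    ((hu.isLittleO_taylor_two.comp_tendsto hpath).trans_isBigO hscale).tendsto_div_nhds_zero
  have hlim := (hrem.mono_left (nhdsWithin_le_nhds (s := {0}ᶜ))).add_const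
    (2⁻¹ * fderiv ℝ (fderiv ℝ u) x z z)
  rw [zero_add] at hlim
  refine hlim.congr' ?_
  filter_upwards [self_mem_nhdsWithin] with δ (hδ : δ ≠ 0)
  simp only [Function.comp_apply, add_sub_cancel_left, map_smul, smul_apply,
    smul_eq_mul]
  field_simp
  ring

theorem ContDiffAt.exists_ball_continuousAt_and_abs_sub_sub_fderiv_le (hu : ContDiffAt ℝ 2 u x) :
    ∃ ρ > 0, ∃ C ≥ 0, ∀ y ∈ ball x ρ,
      ContinuousAt u y ∧ |u y - u x - fderiv ℝ u x (y - x)| ≤ C * ‖y - x‖ ^ 2 := by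
  obtain ⟨C, hC, hbound⟩ := hu.isBigO_sub_sub_fderiv.exists_nonneg
  obtain ⟨ρ, hρ, h⟩ := eventually_nhds_iff_ball.1 <|
    (hu.eventually (by simp)).and hbound.bound
  exact ⟨ρ, hρ, C, hC, fun y hy => ⟨(h y hy).1.continuousAt, by simpa using (h y hy).2⟩⟩

end Taylor

section Symmetry

variable {E F : Type*} [NormedAddCommGroup E] [NormedSpace ℝ E] [MeasurableSpace E] [BorelSpace E]
  [NormedAddCommGroup F] [NormedSpace ℝ F] {μ : Measure E}

theorem setIntegral_ball_comp_linearIsometryEquiv (e : E ≃ₗᵢ[ℝ] E) (he : MeasurePreserving e μ μ)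
    (g : E → F) (r : ℝ) : ∫ z in ball 0 r, g (e z) ∂μ = ∫ z in ball 0 r, g z ∂μ := by
  rw [← he.setIntegral_preimage_emb e.toHomeomorph.measurableEmbedding g, e.preimage_ball,
    map_zero]

theorem setIntegral_ball_eq_zero_of_comp_eq_neg (e : E ≃ₗᵢ[ℝ] E) (he : MeasurePreserving e μ μ)
    {g : E → F} (hg : ∀ z, g (e z) = -g z) (r : ℝ) : ∫ z in ball 0 r, g z ∂μ = 0 := by
  have h := setIntegral_ball_comp_linearIsometryEquiv e he g r
  simp only [hg, integral_neg] at h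
  rw [neg_eq_iff_add_eq_zero, ← two_smul ℝ, smul_eq_zero] at h
  exact h.resolve_left two_ne_zero

end Symmetry

section Domination

variable {E : Type*} [NormedAddCommGroup E] [MeasurableSpace E] [OpensMeasurableSpace E]
  {μ : Measure E}

theorem integrableOn_mul_comp_norm_of_abs_le {γ : ℝ → ℝ} {s : Set E} (hγ : Measurable γ)
    (hint : IntegrableOn (fun z => ‖z‖ * γ ‖z‖) s μ) (hs : MeasurableSet s) {w : E → ℝ}
    (hw : AEStronglyMeasurable w (μ.restrict s)) {K : ℝ} (hK : ∀ z ∈ s, |w z| ≤ K * ‖z‖) :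
    IntegrableOn (fun z => w z * γ ‖z‖) s μ := by
  refine (hint.norm.const_mul K).mono' (hw.mul (hγ.comp measurable_norm).aestronglyMeasurable) ?_
  filter_upwards [ae_restrict_mem hs] with z hz
  calc ‖w z * γ ‖z‖‖ = |w z| * |γ ‖z‖| := by rw [Real.norm_eq_abs, abs_mul]
    _ ≤ K * ‖z‖ * |γ ‖z‖| := by gcongr; exact hK z hz
    _ = K * ‖‖z‖ * γ ‖z‖‖ := by rw [Real.norm_eq_abs, abs_mul, abs_norm, mul_assoc]

variable [NormedSpace ℝ E] {u : E → ℝ} {x : E}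

theorem ContDiffAt.exists_forall_aestronglyMeasurable_and_abs_sub_sub_fderiv_le
    (hu : ContDiffAt ℝ 2 u x) :
    ∃ ρ > 0, ∃ C, ∀ δ ∈ Ioo 0 ρ,
      AEStronglyMeasurable (fun z => u (x + δ • z) - u x - fderiv ℝ u x (δ • z))
        (μ.restrict (ball 0 1)) ∧
      ∀ z ∈ ball (0 : E) 1, |u (x + δ • z) - u x - fderiv ℝ u x (δ • z)| ≤ C * δ ^ 2 * ‖z‖ := by
  obtain ⟨ρ, hρ, C, hC, hloc⟩ := hu.exists_ball_continuousAt_and_abs_sub_sub_fderiv_le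
  refine ⟨ρ, hρ, C, fun δ hδ => ?_⟩
  have hmem : ∀ z ∈ ball (0 : E) 1, x + δ • z ∈ ball x ρ := by
    intro z hz
    rw [mem_ball, dist_self_add_left, norm_smul, Real.norm_of_nonneg hδ.1.le]
    rw [mem_ball_zero_iff] at hz
    nlinarith [hδ.1, hδ.2]
  have hcont : ContinuousOn (fun z => u (x + δ • z)) (ball 0 1) := fun z hz =>
    ((hloc _ (hmem z hz)).1.comp (f := fun z => x + δ • z) (by fun_prop)).continuousWithinAt
  refine ⟨((hcont.sub continuousOn_const).sub (by fun_prop)).aestronglyMeasurable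
    measurableSet_ball, fun z hz => ?_⟩
  have h := (hloc _ (hmem z hz)).2
  rw [add_sub_cancel_left, norm_smul, Real.norm_of_nonneg hδ.1.le] at h
  calc _ ≤ C * (δ * ‖z‖) ^ 2 := h
    _ = C * δ ^ 2 * (‖z‖ * ‖z‖) := by ring
    _ ≤ C * δ ^ 2 * ‖z‖ := by
      gcongr
      exact mul_le_of_le_one_left (norm_nonneg z) (mem_ball_zero_iff.1 hz).le

end Domination

section NonlocalOperator

open Module

variable {E : Type*} [NormedAddCommGroup E] [NormedSpace ℝ E] [FiniteDimensional ℝ E]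
  [MeasurableSpace E] [BorelSpace E] (μ : Measure E) [μ.IsAddHaarMeasure]

theorem setIntegral_ball_eq_pow_mul_setIntegral_unitBall (x : E) {δ : ℝ} (hδ : 0 < δ)
    (f : E → ℝ) :
    ∫ y in ball x δ, f y ∂μ = δ ^ finrank ℝ E * ∫ z in ball 0 1, f (x + δ • z) ∂μ := by
  rw [Measure.setIntegral_comp_smul_of_pos μ (fun z => f (x + z)) _ hδ, smul_unitBall_of_pos hδ,
    smul_eq_mul, mul_inv_cancel_left₀ (by positivity),
    ← (measurePreserving_add_left μ x).setIntegral_preimage_emb (measurableEmbedding_addLeft x),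
    preimage_add_ball, sub_self]

noncomputable def nonlocalOperator (γ : ℝ → ℝ) (δ : ℝ) (u : E → ℝ) (x : E) : ℝ :=
  (δ ^ (finrank ℝ E + 2))⁻¹ * ∫ y in ball x δ, γ (‖y - x‖ / δ) * (u y - u x) ∂μ

variable {μ} {γ : ℝ → ℝ} {u : E → ℝ} {x : E}

theorem nonlocalOperator_eq_setIntegral_unitBall (hγ : Measurable γ)
    (hint : IntegrableOn (fun z => ‖z‖ * γ ‖z‖) (ball 0 1) μ) {δ : ℝ} (hδ : 0 < δ)
    (L : E →L[ℝ] ℝ)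
    (hR : IntegrableOn (fun z => (u (x + δ • z) - u x - L (δ • z)) * γ ‖z‖) (ball 0 1) μ) :
    nonlocalOperator μ γ δ u x =
      ∫ z in ball 0 1, (δ ^ 2)⁻¹ * (u (x + δ • z) - u x - L (δ • z)) * γ ‖z‖ ∂μ := by
  have hlin : IntegrableOn (fun z => L (δ • z) * γ ‖z‖) (ball 0 1) μ :=
    integrableOn_mul_comp_norm_of_abs_le hγ hint measurableSet_ball
      (by fun_prop : Continuous fun z => L (δ • z)).aestronglyMeasurable (K := ‖L‖ * δ)
      fun z _ => by simpa [norm_smul, abs_of_pos hδ, mul_assoc] using L.le_opNorm (δ • z)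
  have hodd : ∫ z in ball 0 1, L (δ • z) * γ ‖z‖ ∂μ = 0 :=
    setIntegral_ball_eq_zero_of_comp_eq_neg (.neg ℝ) μ.measurePreserving_neg (fun z => by simp) 1
  have hsplit : ∫ z in ball 0 1, γ (‖x + δ • z - x‖ / δ) * (u (x + δ • z) - u x) ∂μ =
      ∫ z in ball 0 1, (u (x + δ • z) - u x - L (δ • z)) * γ ‖z‖ ∂μ := by
    have hadd := integral_add hR hlin
    rw [hodd, add_zero] at hadd
    rw [← hadd]
    refine setIntegral_congr_fun measurableSet_ball fun z _ => ?_
    simp only [add_sub_cancel_left, norm_smul, Real.norm_of_nonneg hδ.le,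
      mul_div_cancel_left₀ _ hδ.ne']
    ring
  rw [nonlocalOperator, setIntegral_ball_eq_pow_mul_setIntegral_unitBall μ x hδ, hsplit,
    ← mul_assoc, ← integral_const_mul]
  refine setIntegral_congr_fun measurableSet_ball fun z _ => ?_
  field_simp
  ring

theorem tendsto_nonlocalOperator (hγ : Measurable γ)
    (hint : IntegrableOn (fun z => ‖z‖ * γ ‖z‖) (ball 0 1) μ) (hu : ContDiffAt ℝ 2 u x) :
    Tendsto (fun δ => nonlocalOperator μ γ δ u x) (𝓝[>] 0)
      (𝓝 (∫ z in ball 0 1, 2⁻¹ * fderiv ℝ (fderiv ℝ u) x z z * γ ‖z‖ ∂μ)) := by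
  set L := fderiv ℝ u x
  obtain ⟨ρ, hρ, C, hR⟩ :=
    hu.exists_forall_aestronglyMeasurable_and_abs_sub_sub_fderiv_le (μ := μ)
  have hδ : ∀ᶠ δ in 𝓝[>] 0, δ ∈ Ioo 0 ρ := Ioo_mem_nhdsGT hρ
  have hdom : ∀ δ ∈ Ioo 0 ρ, ∀ z ∈ ball (0 : E) 1,
      ‖(δ ^ 2)⁻¹ * (u (x + δ • z) - u x - L (δ • z)) * γ ‖z‖‖ ≤ C * ‖‖z‖ * γ ‖z‖‖ := by
    intro δ hδ z hz
    have hδ2 : 0 < δ ^ 2 := by have := hδ.1; positivity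
    calc _ = (δ ^ 2)⁻¹ * |u (x + δ • z) - u x - L (δ • z)| * |γ ‖z‖| := by
          rw [Real.norm_eq_abs, abs_mul, abs_mul, abs_of_pos (inv_pos.2 hδ2)]
      _ ≤ (δ ^ 2)⁻¹ * (C * δ ^ 2 * ‖z‖) * |γ ‖z‖| := by gcongr; exact (hR δ hδ).2 z hz
      _ = C * ‖‖z‖ * γ ‖z‖‖ := by
          have := hδ.1.ne'
          rw [Real.norm_eq_abs, abs_mul, abs_norm]
          field_simp
  have hlim := tendsto_integral_filter_of_dominated_convergence (μ := μ.restrict (ball 0 1))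
    (F := fun δ z => (δ ^ 2)⁻¹ * (u (x + δ • z) - u x - L (δ • z)) * γ ‖z‖)
    (fun z => C * ‖‖z‖ * γ ‖z‖‖)
    (hδ.mono fun δ hδ =>
      (((hR δ hδ).1.const_mul _).mul (hγ.comp measurable_norm).aestronglyMeasurable))
    (hδ.mono fun δ hδ => (ae_restrict_iff' measurableSet_ball).2 (.of_forall (hdom δ hδ)))
    (hint.norm.const_mul C)
    (.of_forall fun z => ((hu.tendsto_inv_sq_mul_sub_sub_fderiv z).mono_left
      (nhdsWithin_mono _ fun δ hδ => ne_of_gt hδ)).mul_const _)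
  refine hlim.congr' (hδ.mono fun δ hδ => ?_)
  exact (nonlocalOperator_eq_setIntegral_unitBall hγ hint hδ.1 L <|
    integrableOn_mul_comp_norm_of_abs_le hγ hint measurableSet_ball (hR δ hδ).1
      (hR δ hδ).2).symm

end NonlocalOperator

section Euclidean

variable {d : ℕ}

noncomputable def EuclideanSpace.reflectCoord (i : Fin d) :
    EuclideanSpace ℝ (Fin d) ≃ₗᵢ[ℝ] EuclideanSpace ℝ (Fin d) :=
  LinearIsometryEquiv.piLpCongrRight 2 fun j =>
    if j = i then LinearIsometryEquiv.neg ℝ else LinearIsometryEquiv.refl ℝ ℝ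

theorem EuclideanSpace.reflectCoord_apply (i j : Fin d) (z : EuclideanSpace ℝ (Fin d)) :
    reflectCoord i z j = if j = i then -z j else z j := by
  by_cases h : j = i <;> simp [reflectCoord, h]

theorem setIntegral_ball_coord_mul_coord_mul_eq_zero (γ : ℝ → ℝ) {i j : Fin d} (hij : i ≠ j)
    (r : ℝ) : ∫ z in ball (0 : EuclideanSpace ℝ (Fin d)) r, z i * z j * γ ‖z‖ = 0 :=
  setIntegral_ball_eq_zero_of_comp_eq_neg (EuclideanSpace.reflectCoord i)
    (LinearIsometryEquiv.measurePreserving _) (fun z => by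
      simp [EuclideanSpace.reflectCoord_apply, hij.symm]) r

theorem setIntegral_ball_coord_sq_mul_eq (γ : ℝ → ℝ) (i j : Fin d) (r : ℝ) :
    ∫ z in ball (0 : EuclideanSpace ℝ (Fin d)) r, z i ^ 2 * γ ‖z‖ =
      ∫ z in ball (0 : EuclideanSpace ℝ (Fin d)) r, z j ^ 2 * γ ‖z‖ := by
  rw [← setIntegral_ball_comp_linearIsometryEquiv
    (LinearIsometryEquiv.piLpCongrLeft 2 ℝ ℝ (Equiv.swap i j))
    (LinearIsometryEquiv.measurePreserving _)]
  simp [LinearIsometryEquiv.piLpCongrLeft_apply]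

theorem EuclideanSpace.bilinear_apply_self_eq_sum
    (A : EuclideanSpace ℝ (Fin d) →L[ℝ] EuclideanSpace ℝ (Fin d) →L[ℝ] ℝ)
    (z : EuclideanSpace ℝ (Fin d)) :
    A z z = ∑ i, ∑ j, z i * z j * A (single i 1) (single j 1) := by
  conv_lhs => rw [← (basisFun (Fin d) ℝ).sum_repr z]
  simp only [map_sum, map_smul, FunLike.coe_sum, FunLike.coe_smul,
    Finset.sum_apply, Pi.smul_apply, basisFun_apply, basisFun_repr, smul_eq_mul, Finset.mul_sum]
  rw [Finset.sum_comm]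
  exact Finset.sum_congr rfl fun i _ => Finset.sum_congr rfl fun j _ => by ring

theorem setIntegral_unitBall_bilinear_apply_self_mul {γ : ℝ → ℝ} (hγ : Measurable γ)
    (hint : IntegrableOn (fun z => ‖z‖ * γ ‖z‖) (ball (0 : EuclideanSpace ℝ (Fin d)) 1))
    (A : EuclideanSpace ℝ (Fin d) →L[ℝ] EuclideanSpace ℝ (Fin d) →L[ℝ] ℝ) (i₀ : Fin d) :
    ∫ z in ball (0 : EuclideanSpace ℝ (Fin d)) 1, A z z * γ ‖z‖ =
      (∫ z in ball (0 : EuclideanSpace ℝ (Fin d)) 1, z i₀ ^ 2 * γ ‖z‖) *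
        ∑ i, A (EuclideanSpace.single i 1) (EuclideanSpace.single i 1) := by
  have hint' (i j : Fin d) :
      IntegrableOn (fun z : EuclideanSpace ℝ (Fin d) => z i * z j * γ ‖z‖) (ball 0 1) := by
    refine integrableOn_mul_comp_norm_of_abs_le hγ hint measurableSet_ball
      (by fun_prop : Continuous fun z : EuclideanSpace ℝ (Fin d) => z i * z j).aestronglyMeasurable
      (K := 1) fun z hz => ?_
    have hi : |z i| ≤ ‖z‖ := PiLp.norm_apply_le z i
    have hj : |z j| ≤ 1 := (PiLp.norm_apply_le z j).trans (mem_ball_zero_iff.1 hz).le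
    simpa [abs_mul] using mul_le_mul hi hj (abs_nonneg _) (norm_nonneg _)
  calc ∫ z in ball (0 : EuclideanSpace ℝ (Fin d)) 1, A z z * γ ‖z‖
      = ∫ z in ball (0 : EuclideanSpace ℝ (Fin d)) 1, ∑ i, ∑ j,
          A (.single i 1) (.single j 1) * (z i * z j * γ ‖z‖) := by
        refine setIntegral_congr_fun measurableSet_ball fun z _ => ?_
        simp only [EuclideanSpace.bilinear_apply_self_eq_sum A z, Finset.sum_mul]
        exact Finset.sum_congr rfl fun i _ => Finset.sum_congr rfl fun j _ => by ring
    _ = ∑ i, ∑ j, A (.single i 1) (.single j 1) *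
          ∫ z in ball (0 : EuclideanSpace ℝ (Fin d)) 1, z i * z j * γ ‖z‖ := by
        rw [integral_finsetSum _ fun i _ => integrable_finsetSum _ fun j _ =>
          (hint' i j).const_mul _]
        simp only [integral_finsetSum _ fun j _ => (hint' _ j).const_mul _, integral_const_mul]
    _ = ∑ i, (∫ z in ball (0 : EuclideanSpace ℝ (Fin d)) 1, z i₀ ^ 2 * γ ‖z‖) *
          A (.single i 1) (.single i 1) := by
        refine Finset.sum_congr rfl fun i _ => ?_
        rw [Finset.sum_eq_single i (fun j _ hji => by
            rw [setIntegral_ball_coord_mul_coord_mul_eq_zero γ hji.symm, mul_zero]) (by simp),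
          ← setIntegral_ball_coord_sq_mul_eq γ i i₀, mul_comm]
        simp only [sq]
    _ = _ := (Finset.mul_sum ..).symm

theorem laplacian_eq_sum_fderiv_fderiv (u : EuclideanSpace ℝ (Fin d) → ℝ)
    (x : EuclideanSpace ℝ (Fin d)) :
    laplacian d u x =
      ∑ i, fderiv ℝ (fderiv ℝ u) x (EuclideanSpace.single i 1) (EuclideanSpace.single i 1) := by
  simp only [laplacian, iteratedFDeriv_two_apply]

end Euclidean

theorem stmt_0 (d : ℕ) (hd : 1 ≤ d) (γ : ℝ → ℝ) (hγmeas : Measurable γ)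
    (hint : IntegrableOn (fun z : EuclideanSpace ℝ (Fin d) => ‖z‖ * γ ‖z‖)
      (Metric.ball (0 : EuclideanSpace ℝ (Fin d)) 1))
    (M : ℝ)
    (hM : M = ∫ z in Metric.ball (0 : EuclideanSpace ℝ (Fin d)) 1,
      (z ⟨0, hd⟩) ^ 2 * γ ‖z‖)
    (x : EuclideanSpace ℝ (Fin d)) (u : EuclideanSpace ℝ (Fin d) → ℝ)
    (s : Set (EuclideanSpace ℝ (Fin d))) (hs : s ∈ nhds x) (hu : ContDiffOn ℝ 2 u s) :
    Filter.Tendsto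
      (fun δ : ℝ =>
        (δ ^ (d + 2))⁻¹ * ∫ y in Metric.ball x δ, γ (‖y - x‖ / δ) * (u y - u x))
      (nhdsWithin 0 (Set.Ioi 0))
      (nhds ((M / 2) * laplacian d u x)) := by
  have hlim := tendsto_nonlocalOperator hγmeas hint (hu.contDiffAt hs)
  simp only [nonlocalOperator, finrank_euclideanSpace_fin] at hlim
  convert hlim using 2
  simp only [mul_assoc, integral_const_mul]
  rw [setIntegral_unitBall_bilinear_apply_self_mul hγmeas hint _ ⟨0, hd⟩, ← hM,
    laplacian_eq_sum_fderiv_fderiv]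
  ring
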